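/- arXiv:2411.10999 — 3 statements merged into one kernel-verified Lean document; each statement's English description precedes it below -/
import Mathlib

section
/- Let H₁, H₂ ∈ M_n(ℂ) and let u_f : ℝ → ℂⁿ be differentiable with u_f′(t) = (H₁ + iH₂)·u_f(t) for all t. Then the warped phase transformation w(t,p) := e^{−p}·u_f(t), defined for (t,p) ∈ ℝ × ℝ, satisfies the system of linear convection equations ∂ₜw(t,p) = −H₁·(∂ₚw)(t,p) + iH₂·w(t,p) for all (t,p). -/
/-! Since `∂ₚ e^{-p} = -e^{-p}`, the convection term `-H₁ ∂ₚw` equals `e^{-p} H₁ u_f`, so the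
right-hand side is `e^{-p} (H₁ + iH₂) u_f`, which is `∂ₜw` by the ODE. -/

open Matrix

theorem hasDerivAt_exp_neg_smul {E : Type*} [NormedAddCommGroup E] [NormedSpace ℝ E]
    (v : E) (p : ℝ) :
    HasDerivAt (fun q => Real.exp (-q) • v) (-Real.exp (-p) • v) p := by
  simpa using ((Real.hasDerivAt_exp (-p)).comp p (hasDerivAt_neg p)).smul_const v

theorem neg_mulVec_neg_smul_add_I_smul_mulVec_smul {m : Type*} [Fintype m]
    (H₁ H₂ : Matrix m m ℂ) (c : ℝ) (v : m → ℂ) :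
    -(H₁ *ᵥ (-c • v)) + Complex.I • H₂ *ᵥ (c • v) = c • (H₁ + Complex.I • H₂) *ᵥ v := by
  simp only [neg_smul, mulVec_neg, neg_neg, mulVec_smul, add_mulVec, smul_mulVec, smul_add,
    smul_comm c Complex.I]

/-- The warped phase transformation `w(t,p) = e^{−p} u_f(t)` turns the linear ODE
system `u_f′ = (H₁ + iH₂) u_f` into the system of linear convection equations
`∂ₜ w = −H₁ ∂ₚ w + i H₂ w`. -/
theorem warped_phase_transformation_convection
    {n : ℕ} (H₁ H₂ : Matrix (Fin n) (Fin n) ℂ)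
    (uf : ℝ → Fin n → ℂ)
    (huf : ∀ t : ℝ, HasDerivAt uf ((H₁ + Complex.I • H₂).mulVec (uf t)) t)
    (w : ℝ → ℝ → Fin n → ℂ)
    (hw : ∀ (t p : ℝ), w t p = Real.exp (-p) • uf t) :
    ∀ (t p : ℝ),
      HasDerivAt (fun τ => w τ p)
        (-(H₁.mulVec (deriv (fun q => w t q) p)) + Complex.I • H₂.mulVec (w t p)) t := by
  intro t p
  have hw_p : deriv (fun q => w t q) p = -Real.exp (-p) • uf t := by
    simp_rw [hw]
    exact (hasDerivAt_exp_neg_smul (uf t) p).deriv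
  have hw_t : HasDerivAt (fun τ => w τ p) (Real.exp (-p) • (H₁ + Complex.I • H₂) *ᵥ uf t) t := by
    simp_rw [hw]
    exact (huf t).const_smul (Real.exp (-p))
  rwa [hw_p, hw, neg_mulVec_neg_smul_add_I_smul_mulVec_smul]
end

section
/- Let H₁, H₂ ∈ M_n(ℂ) be Hermitian matrices, let λ_max denote the largest eigenvalue of H₁, and fix T > 0. Let u_f : [0,T] → ℂⁿ be differentiable with u_f′(t) = (H₁ + iH₂)u_f(t). Let w : [0,T] × ℝ → ℂⁿ be a C¹ solution of ∂ₜw = −H₁·∂ₚw + iH₂·w whose initial data satisfies w(0,p) = e^{−p}·u_f(0) for all p ≥ 0 (w(0,p) may be arbitrary for p < 0). Assume that for each t ∈ [0,T] the functions p ↦ w(t,p) − e^{−p}u_f(t) and p ↦ ∂ₚw(t,p) + e^{−p}u_f(t) are square-integrable on ℝ. Then for every t ∈ [0,T] and every p* > max{λ_max·T, 0} one has w(t,p*) = e^{−p*}·u_f(t); in particular u_f(T) = e^{p*}·w(T,p*) for any such p*. -/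
/-!
`e^{-p} u_f(t)` solves the convection system exactly, so `V = w - e^{-p} u_f` solves the
homogeneous symmetric hyperbolic system `∂ₜV = -H₁ ∂ₚV + i H₂ V` and vanishes at `t = 0` for
`p ≥ 0`. Its characteristic speeds lie between the extreme eigenvalues `lo ≤ hi` of `H₁`, so
`V (t, p*)` only depends on the initial data on `[p* - hi t, p* - lo t] ⊆ (0, ∞)`.

Quantitatively, consider the trapezoid whose sides `p = a + hi s` and `p = b + lo s` move with
the extreme speeds. Since `i H₂` is skew-Hermitian, `∂ₜ|V|² = -∂ₚ⟨V, H₁V⟩`, and the fluxes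
through the two sides, `hi |V|² - ⟨V, H₁V⟩` and `⟨V, H₁V⟩ - lo |V|²`, are nonnegative; hence the
energy `∫ |V|² dp` over the trapezoid's cross-section does not increase. Parametrising the
cross-section by `θ ∈ [0, 1]` turns this moving-boundary integral into one over a fixed
interval. The energy vanishes at time `0`, hence at time `t`, so `V (t, ·) = 0` near `p*`.
-/

open Function Matrix MeasureTheory Set
open scoped Interval

namespace Matrix.IsHermitian

variable {m : Type*} [Fintype m] {A : Matrix m m ℂ}

lemma re_star_dotProduct_mulVec_comm (hA : A.IsHermitian) (x y : m → ℂ) :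
    (star x ⬝ᵥ A *ᵥ y).re = (star y ⬝ᵥ A *ᵥ x).re := by
  have h : star x ⬝ᵥ A *ᵥ y = star (star y ⬝ᵥ A *ᵥ x) := by
    conv_rhs => rw [dotProduct_mulVec, ← hA.eq, ← star_mulVec, star_dotProduct, star_star]
  rw [h, Complex.star_def, Complex.conj_re]

lemma re_star_dotProduct_I_smul_mulVec_self (hA : A.IsHermitian) (x : m → ℂ) :
    (star x ⬝ᵥ Complex.I • A *ᵥ x).re = 0 := by
  rw [dotProduct_smul, smul_eq_mul, Complex.mul_re, Complex.I_re, Complex.I_im]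
  simpa using hA.im_star_dotProduct_mulVec_self x

variable [DecidableEq m]

open scoped MatrixOrder ComplexOrder in
lemma re_star_dotProduct_mulVec_le (hA : A.IsHermitian) {c : ℝ} (hc : ∀ i, hA.eigenvalues i ≤ c)
    (x : m → ℂ) : (star x ⬝ᵥ A *ᵥ x).re ≤ c * (star x ⬝ᵥ x).re := by
  have hle : A ≤ algebraMap ℝ (Matrix m m ℂ) c := le_algebraMap_of_spectrum_le (by
    rw [hA.spectrum_real_eq_range_eigenvalues]; rintro _ ⟨i, rfl⟩; exact hc i) hA.isSelfAdjoint
  have := (Complex.nonneg_iff.mp ((le_iff.mp hle).dotProduct_mulVec_nonneg x)).1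
  simpa [Algebra.algebraMap_eq_smul_one, sub_mulVec, smul_mulVec, dotProduct_sub] using this

open scoped MatrixOrder ComplexOrder in
lemma le_re_star_dotProduct_mulVec (hA : A.IsHermitian) {c : ℝ} (hc : ∀ i, c ≤ hA.eigenvalues i)
    (x : m → ℂ) : c * (star x ⬝ᵥ x).re ≤ (star x ⬝ᵥ A *ᵥ x).re := by
  have hle : algebraMap ℝ (Matrix m m ℂ) c ≤ A := algebraMap_le_of_le_spectrum (by
    rw [hA.spectrum_real_eq_range_eigenvalues]; rintro _ ⟨i, rfl⟩; exact hc i) hA.isSelfAdjoint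
  have := (Complex.nonneg_iff.mp ((le_iff.mp hle).dotProduct_mulVec_nonneg x)).1
  simpa [Algebra.algebraMap_eq_smul_one, sub_mulVec, smul_mulVec, dotProduct_sub] using this

end Matrix.IsHermitian

section StarDotProduct

variable {m : Type*} [Fintype m]

open scoped ComplexOrder in
lemma re_star_dotProduct_self_nonneg (x : m → ℂ) : 0 ≤ (star x ⬝ᵥ x).re :=
  (Complex.nonneg_iff.mp (dotProduct_star_self_nonneg x)).1

open scoped ComplexOrder in
lemma re_star_dotProduct_self_eq_zero {x : m → ℂ} : (star x ⬝ᵥ x).re = 0 ↔ x = 0 := by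
  rw [← dotProduct_star_self_eq_zero, Complex.ext_iff]
  simp [(Complex.nonneg_iff.mp (dotProduct_star_self_nonneg x)).2.symm]

variable {𝔸 : Type*} [NormedCommRing 𝔸] [NormedAlgebra ℝ 𝔸] {u v : ℝ → m → 𝔸} {u' v' : m → 𝔸}
  {s : ℝ}

lemma HasDerivAt.dotProduct (hu : HasDerivAt u u' s) (hv : HasDerivAt v v' s) :
    HasDerivAt (fun τ => u τ ⬝ᵥ v τ) (u' ⬝ᵥ v s + u s ⬝ᵥ v') s := by
  rw [hasDerivAt_pi] at hu hv
  refine (HasDerivAt.fun_sum (u := Finset.univ) fun i _ => (hu i).mul (hv i)).congr_deriv ?_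
  rw [Finset.sum_add_distrib]
  rfl

lemma HasDerivAt.mulVec (A : Matrix m m 𝔸) (hu : HasDerivAt u u' s) :
    HasDerivAt (fun τ => A *ᵥ u τ) (A *ᵥ u') s := by
  rw [hasDerivAt_pi] at hu ⊢
  exact fun i => HasDerivAt.fun_sum fun j _ => (hu j).const_mul (A i j)

lemma HasDerivAt.re_star_dotProduct_mulVec_self {A : Matrix m m ℂ} (hA : A.IsHermitian)
    {u : ℝ → m → ℂ} {u' : m → ℂ} (hu : HasDerivAt u u' s) :
    HasDerivAt (fun τ => (star (u τ) ⬝ᵥ A *ᵥ u τ).re) (2 * (star (u s) ⬝ᵥ A *ᵥ u').re) s := by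
  refine (Complex.reCLM.hasFDerivAt.comp_hasDerivAt s
    (hu.star.dotProduct (hu.mulVec A))).congr_deriv ?_
  rw [Complex.reCLM_apply, Complex.add_re, hA.re_star_dotProduct_mulVec_comm u' (u s)]
  ring

lemma HasDerivAt.re_star_dotProduct_self {u : ℝ → m → ℂ} {u' : m → ℂ} (hu : HasDerivAt u u' s) :
    HasDerivAt (fun τ => (star (u τ) ⬝ᵥ u τ).re) (2 * (star (u s) ⬝ᵥ u').re) s := by
  classical
  simpa using hu.re_star_dotProduct_mulVec_self isHermitian_one

end StarDotProduct

section ParametricIntegral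

variable {E : Type*} [NormedAddCommGroup E] [NormedSpace ℝ E] {a b : ℝ}

theorem hasDerivAt_intervalIntegral_of_continuousOn {f f' : ℝ → ℝ → E} {U : Set ℝ} {x₀ : ℝ}
    (hU : IsOpen U) (hx₀ : x₀ ∈ U) (hab : a ≤ b) (hf : ∀ x ∈ U, ContinuousOn (f x) (Icc a b))
    (hf' : ContinuousOn (uncurry f') (U ×ˢ Icc a b))
    (hderiv : ∀ x ∈ U, ∀ θ ∈ Icc a b, HasDerivAt (f · θ) (f' x θ) x) :
    HasDerivAt (fun x => ∫ θ in a..b, f x θ) (∫ θ in a..b, f' x₀ θ) x₀ := by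
  obtain ⟨K, hK, hx₀K, hKU⟩ := exists_compact_subset hU hx₀
  obtain ⟨C, hC⟩ :=
    (hK.prod isCompact_Icc).exists_bound_of_continuousOn (hf'.mono (prod_mono hKU le_rfl))
  have hIoc : Ι a b ⊆ Icc a b := by rw [uIoc_of_le hab]; exact Ioc_subset_Icc_self
  refine (intervalIntegral.hasDerivAt_integral_of_dominated_loc_of_deriv_le
    (bound := fun _ => C) (isOpen_interior.mem_nhds hx₀K) ?_
    ((hf x₀ hx₀).intervalIntegrable_of_Icc hab) ?_ ?_ intervalIntegrable_const ?_).2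
  · filter_upwards [hU.mem_nhds hx₀] with x hx
    exact ((hf x hx).mono hIoc).aestronglyMeasurable measurableSet_uIoc
  · exact ((hf'.uncurry_left x₀ hx₀).mono hIoc).aestronglyMeasurable measurableSet_uIoc
  · exact Filter.Eventually.of_forall fun θ hθ x hx => hC (x, θ) ⟨interior_subset hx, hIoc hθ⟩
  · exact Filter.Eventually.of_forall fun θ hθ x hx =>
      hderiv x (hKU (interior_subset hx)) θ (hIoc hθ)

theorem continuousOn_intervalIntegral_of_continuousOn {f : ℝ → ℝ → E} {c d : ℝ} (hcd : c ≤ d)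
    (hab : a ≤ b) (hf : ContinuousOn (uncurry f) (Icc c d ×ˢ Icc a b)) :
    ContinuousOn (fun x => ∫ θ in a..b, f x θ) (Icc c d) := by
  have hg : Continuous (uncurry fun x θ => f (projIcc c d hcd x) (projIcc a b hab θ)) :=
    hf.comp_continuous
      (f := fun q : ℝ × ℝ => ((projIcc c d hcd q.1 : ℝ), (projIcc a b hab q.2 : ℝ))) (by fun_prop)
      fun q => ⟨(projIcc c d hcd q.1).2, (projIcc a b hab q.2).2⟩
  refine (intervalIntegral.continuous_parametric_intervalIntegral_of_continuous' hg a b)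
    |>.continuousOn.congr fun x hx => intervalIntegral.integral_congr fun θ hθ => ?_
  rw [uIcc_of_le hab] at hθ
  simp [projIcc_of_mem, hx, hθ]

end ParametricIntegral

theorem antitoneOn_intervalIntegral_of_hasDerivAt_flux {e e' φ : ℝ → ℝ → ℝ} {t : ℝ} (ht : 0 ≤ t)
    (he : ContinuousOn (uncurry e) (Icc 0 t ×ˢ Icc 0 1))
    (he' : ContinuousOn (uncurry e') (Ioo 0 t ×ˢ Icc 0 1))
    (he_deriv : ∀ s ∈ Ioo 0 t, ∀ θ ∈ Icc (0 : ℝ) 1, HasDerivAt (e · θ) (e' s θ) s)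
    (hφ_deriv : ∀ s ∈ Ioo 0 t, ∀ θ ∈ Icc (0 : ℝ) 1, HasDerivAt (φ s) (e' s θ) θ)
    (hφ : ∀ s ∈ Ioo 0 t, φ s 1 ≤ φ s 0) :
    AntitoneOn (fun s => ∫ θ in (0 : ℝ)..1, e s θ) (Icc 0 t) := by
  have hderiv (s) (hs : s ∈ Ioo 0 t) :
      HasDerivAt (fun s => ∫ θ in (0 : ℝ)..1, e s θ) (φ s 1 - φ s 0) s := by
    rw [← intervalIntegral.integral_eq_sub_of_hasDerivAt
      (fun θ hθ => hφ_deriv s hs θ (by rwa [uIcc_of_le zero_le_one] at hθ))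
      ((he'.uncurry_left s hs).intervalIntegrable_of_Icc zero_le_one)]
    exact hasDerivAt_intervalIntegral_of_continuousOn isOpen_Ioo hs zero_le_one
      (fun x hx => he.uncurry_left x (Ioo_subset_Icc_self hx)) he' he_deriv
  refine antitoneOn_of_deriv_nonpos (convex_Icc 0 t)
    (continuousOn_intervalIntegral_of_continuousOn ht zero_le_one he) ?_ ?_ <;> rw [interior_Icc]
  · exact fun s hs => (hderiv s hs).differentiableAt.differentiableWithinAt
  · intro s hs
    rw [(hderiv s hs).deriv]
    linarith [hφ s hs]

theorem eq_zero_of_intervalIntegral_eq_zero {f : ℝ → ℝ} {a b : ℝ} (hab : a ≤ b)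
    (hf : ContinuousOn f (Icc a b)) (hnn : ∀ x ∈ Icc a b, 0 ≤ f x) (h : ∫ x in a..b, f x = 0)
    {x : ℝ} (hx : x ∈ Ioo a b) : f x = 0 := by
  have hae : f =ᵐ[volume.restrict (Ioc a b)] 0 :=
    (intervalIntegral.integral_eq_zero_iff_of_le_of_nonneg_ae hab
      ((ae_restrict_mem measurableSet_Ioc).mono fun y hy => hnn y (Ioc_subset_Icc_self hy))
      (hf.intervalIntegrable_of_Icc hab)).mp h
  exact Measure.eqOn_open_of_ae_eq (ae_restrict_of_ae_restrict_of_subset Ioo_subset_Ioc_self hae)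
    isOpen_Ioo (hf.mono Ioo_subset_Icc_self) continuousOn_const hx

section PartialDerivatives

variable {F : Type*} [NormedAddCommGroup F] [NormedSpace ℝ F]

lemma ContinuousLinearMap.apply_prod_eq (L : ℝ × ℝ →L[ℝ] F) (α β : ℝ) :
    L (α, β) = α • L (1, 0) + β • L (0, 1) := by
  rw [← map_smul, ← map_smul, ← map_add]
  simp

lemma fderiv_apply_one_zero {f : ℝ × ℝ → F} {s p : ℝ} (hf : DifferentiableAt ℝ f (s, p)) :
    fderiv ℝ f (s, p) (1, 0) = deriv (fun τ => f (τ, p)) s :=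
  (hf.hasFDerivAt.comp_hasDerivAt s ((hasDerivAt_id s).prodMk (hasDerivAt_const s p))).deriv.symm

lemma fderiv_apply_zero_one {f : ℝ × ℝ → F} {s p : ℝ} (hf : DifferentiableAt ℝ f (s, p)) :
    fderiv ℝ f (s, p) (0, 1) = deriv (fun q => f (s, q)) p :=
  (hf.hasFDerivAt.comp_hasDerivAt p ((hasDerivAt_const p s).prodMk (hasDerivAt_id p))).deriv.symm

theorem contDiffOn_one_of_hasDerivAt {f f' : ℝ → F} {s : Set ℝ} (hs : IsOpen s)
    (hf : ∀ x ∈ s, HasDerivAt f (f' x) x) (hf' : ContinuousOn f' s) : ContDiffOn ℝ 1 f s := by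
  rw [← zero_add 1, contDiffOn_succ_iff_deriv_of_isOpen hs]
  exact ⟨fun x hx => (hf x hx).differentiableAt.differentiableWithinAt, by simp,
    contDiffOn_zero.mpr (hf'.congr fun x hx => (hf x hx).deriv)⟩

lemma continuousOn_sub_exp_neg_smul {W : ℝ × ℝ → F} {u : ℝ → F} {s : Set ℝ}
    (hW : ContinuousOn W (s ×ˢ univ)) (hu : ContinuousOn u s) :
    ContinuousOn (fun q => W q - Real.exp (-q.2) • u q.1) (s ×ˢ univ) :=
  hW.sub ((continuous_snd.neg.rexp).continuousOn.smul (hu.comp continuousOn_fst fun _ hq => hq.1))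

lemma contDiffOn_sub_exp_neg_smul {W : ℝ × ℝ → F} {u : ℝ → F} {s : Set ℝ} {k : WithTop ℕ∞}
    (hW : ContDiffOn ℝ k W (s ×ˢ univ)) (hu : ContDiffOn ℝ k u s) :
    ContDiffOn ℝ k (fun q => W q - Real.exp (-q.2) • u q.1) (s ×ˢ univ) :=
  hW.sub ((Real.contDiff_exp.comp contDiff_snd.neg).contDiffOn.smul
    (hu.comp contDiffOn_fst fun _ hq => hq.1))

end PartialDerivatives

section Convection

variable {m : Type*} [Fintype m] {H₁ H₂ : Matrix m m ℂ} {V : ℝ × ℝ → m → ℂ}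

lemma re_star_dotProduct_convection (hH₂ : H₂.IsHermitian) (x y : m → ℂ) (α β : ℝ) :
    (star x ⬝ᵥ (α • (-(H₁ *ᵥ y) + Complex.I • H₂ *ᵥ x) + β • y)).re
      = β * (star x ⬝ᵥ y).re - α * (star x ⬝ᵥ H₁ *ᵥ y).re := by
  have hskew := hH₂.re_star_dotProduct_I_smul_mulVec_self x
  simp only [smul_add, dotProduct_add, dotProduct_smul, dotProduct_neg, Complex.add_re,
    Complex.neg_re, Complex.real_smul, Complex.re_ofReal_mul] at hskew ⊢
  linear_combination α * hskew

lemma hasDerivAt_re_star_dotProduct_self_comp (hH₂ : H₂.IsHermitian) {γ : ℝ → ℝ × ℝ}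
    {α β s : ℝ} (hV : DifferentiableAt ℝ V (γ s))
    (hpde : fderiv ℝ V (γ s) (1, 0)
      = -(H₁ *ᵥ fderiv ℝ V (γ s) (0, 1)) + Complex.I • H₂ *ᵥ V (γ s))
    (hγ : HasDerivAt γ (α, β) s) :
    HasDerivAt (fun τ => (star (V (γ τ)) ⬝ᵥ V (γ τ)).re)
      (2 * (β * (star (V (γ s)) ⬝ᵥ fderiv ℝ V (γ s) (0, 1)).re
        - α * (star (V (γ s)) ⬝ᵥ H₁ *ᵥ fderiv ℝ V (γ s) (0, 1)).re)) s := by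
  have h := (hV.hasFDerivAt.comp_hasDerivAt s hγ).re_star_dotProduct_self
  simp only [Function.comp_apply] at h
  rwa [ContinuousLinearMap.apply_prod_eq, hpde, re_star_dotProduct_convection hH₂] at h

theorem convection_pde_sub_exp_neg_smul {W : ℝ × ℝ → m → ℂ} {u : ℝ → m → ℂ} {s p : ℝ}
    (hW : DifferentiableAt ℝ W (s, p))
    (hWpde : deriv (fun τ => W (τ, p)) s
      = -(H₁ *ᵥ deriv (fun q => W (s, q)) p) + Complex.I • H₂ *ᵥ W (s, p))
    (hu : HasDerivAt u ((H₁ + Complex.I • H₂) *ᵥ u s) s) :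
    fderiv ℝ (fun q => W q - Real.exp (-q.2) • u q.1) (s, p) (1, 0)
      = -(H₁ *ᵥ fderiv ℝ (fun q => W q - Real.exp (-q.2) • u q.1) (s, p) (0, 1))
        + Complex.I • H₂ *ᵥ (W (s, p) - Real.exp (-p) • u s) := by
  have hWt : HasDerivAt (fun τ => W (τ, p)) (deriv (fun τ => W (τ, p)) s) s :=
    (hW.comp s (differentiableAt_id.prodMk (differentiableAt_const p))).hasDerivAt
  have hWp : HasDerivAt (fun q => W (s, q)) (deriv (fun q => W (s, q)) p) p :=
    (hW.comp p ((differentiableAt_const s).prodMk differentiableAt_id)).hasDerivAt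
  have hexp : HasDerivAt (fun q => Real.exp (-q)) (-Real.exp (-p)) p := by
    simpa using (hasDerivAt_neg p).exp
  have hV : DifferentiableAt ℝ (fun q => W q - Real.exp (-q.2) • u q.1) (s, p) :=
    hW.fun_sub (DifferentiableAt.fun_smul (by fun_prop)
      (hu.differentiableAt.comp (s, p) differentiableAt_fst))
  have hVt : HasDerivAt (fun τ => W (τ, p) - Real.exp (-p) • u τ)
      (deriv (fun τ => W (τ, p)) s - Real.exp (-p) • ((H₁ + Complex.I • H₂) *ᵥ u s)) s :=
    hWt.fun_sub (hu.fun_const_smul _)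
  have hVp : HasDerivAt (fun q => W (s, q) - Real.exp (-q) • u s)
      (deriv (fun q => W (s, q)) p - (-Real.exp (-p)) • u s) p :=
    hWp.fun_sub (hexp.smul_const (u s))
  rw [fderiv_apply_one_zero hV, fderiv_apply_zero_one hV, hVt.deriv, hVp.deriv, hWpde]
  simp only [add_mulVec, smul_mulVec, mulVec_sub, mulVec_smul]
  module

variable {a b lo hi s t θ : ℝ}

def trapezoid (a b lo hi s θ : ℝ) : ℝ × ℝ := (s, (1 - θ) * (a + hi * s) + θ * (b + lo * s))

lemma continuous_trapezoid : Continuous (uncurry (trapezoid a b lo hi)) := by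
  unfold trapezoid; fun_prop

lemma hasDerivAt_trapezoid_time (s θ : ℝ) :
    HasDerivAt (trapezoid a b lo hi · θ) (1, (1 - θ) * hi + θ * lo) s := by
  refine (hasDerivAt_id s).prodMk ?_
  simpa using ((((hasDerivAt_id' s).const_mul hi).const_add a).const_mul (1 - θ)).fun_add
    ((((hasDerivAt_id' s).const_mul lo).const_add b).const_mul θ)

lemma hasDerivAt_trapezoid_param (s θ : ℝ) :
    HasDerivAt (trapezoid a b lo hi s) (0, b + lo * s - (a + hi * s)) θ := by
  refine (hasDerivAt_const θ s).prodMk ?_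
  simpa [add_comm, sub_eq_neg_add] using
    (((hasDerivAt_id' θ).const_sub 1).mul_const (a + hi * s)).fun_add
      ((hasDerivAt_id' θ).mul_const (b + lo * s))

/-- The factor `b + lo * s - (a + hi * s)` is the Jacobian of `θ ↦ p`, so that the integral over
`θ ∈ [0, 1]` is the energy `∫ |V (s, p)|² dp` of the cross-section at time `s`. -/
def trapezoidEnergy (V : ℝ × ℝ → m → ℂ) (a b lo hi s θ : ℝ) : ℝ :=
  (b + lo * s - (a + hi * s)) *
    (star (V (trapezoid a b lo hi s θ)) ⬝ᵥ V (trapezoid a b lo hi s θ)).re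

def trapezoidFlux (H₁ : Matrix m m ℂ) (V : ℝ × ℝ → m → ℂ) (a b lo hi s θ : ℝ) : ℝ :=
  letI x := V (trapezoid a b lo hi s θ)
  ((1 - θ) * hi + θ * lo) * (star x ⬝ᵥ x).re - (star x ⬝ᵥ H₁ *ᵥ x).re

noncomputable def trapezoidEnergyRate (H₁ : Matrix m m ℂ) (V : ℝ × ℝ → m → ℂ)
    (a b lo hi s θ : ℝ) : ℝ :=
  letI x := V (trapezoid a b lo hi s θ)
  letI y := fderiv ℝ V (trapezoid a b lo hi s θ) (0, 1)
  (lo - hi) * (star x ⬝ᵥ x).re + (b + lo * s - (a + hi * s)) *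
    (2 * (((1 - θ) * hi + θ * lo) * (star x ⬝ᵥ y).re - (star x ⬝ᵥ H₁ *ᵥ y).re))

lemma continuousOn_trapezoidEnergy (hVc : ContinuousOn V (Icc 0 t ×ˢ univ)) :
    ContinuousOn (uncurry (trapezoidEnergy V a b lo hi)) (Icc 0 t ×ˢ Icc 0 1) := by
  have hX : ContinuousOn (V ∘ uncurry (trapezoid a b lo hi)) (Icc 0 t ×ˢ Icc 0 1) :=
    hVc.comp continuous_trapezoid.continuousOn fun z hz => ⟨hz.1, trivial⟩
  change ContinuousOn (fun z : ℝ × ℝ => (b + lo * z.1 - (a + hi * z.1)) *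
    (star ((V ∘ uncurry (trapezoid a b lo hi)) z) ⬝ᵥ (V ∘ uncurry (trapezoid a b lo hi)) z).re) _
  generalize V ∘ uncurry (trapezoid a b lo hi) = X at hX ⊢
  fun_prop

lemma continuousOn_trapezoidEnergyRate (hVc : ContinuousOn V (Icc 0 t ×ˢ univ))
    (hV : ContDiffOn ℝ 1 V (Ioo 0 t ×ˢ univ)) :
    ContinuousOn (uncurry (trapezoidEnergyRate H₁ V a b lo hi)) (Ioo 0 t ×ˢ Icc 0 1) := by
  have hX : ContinuousOn (V ∘ uncurry (trapezoid a b lo hi)) (Ioo 0 t ×ˢ Icc 0 1) :=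
    hVc.comp continuous_trapezoid.continuousOn fun z hz => ⟨Ioo_subset_Icc_self hz.1, trivial⟩
  have hY : ContinuousOn ((fderiv ℝ V · (0, 1)) ∘ uncurry (trapezoid a b lo hi))
      (Ioo 0 t ×ˢ Icc 0 1) :=
    ((hV.continuousOn_fderiv_of_isOpen (isOpen_Ioo.prod isOpen_univ) le_rfl).clm_apply
      continuousOn_const).comp continuous_trapezoid.continuousOn fun z hz => ⟨hz.1, trivial⟩
  change ContinuousOn (fun z : ℝ × ℝ => (lo - hi) *
    (star ((V ∘ uncurry (trapezoid a b lo hi)) z) ⬝ᵥ (V ∘ uncurry (trapezoid a b lo hi)) z).re +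
      (b + lo * z.1 - (a + hi * z.1)) * (2 * (((1 - z.2) * hi + z.2 * lo) *
        (star ((V ∘ uncurry (trapezoid a b lo hi)) z) ⬝ᵥ
          ((fderiv ℝ V · (0, 1)) ∘ uncurry (trapezoid a b lo hi)) z).re -
        (star ((V ∘ uncurry (trapezoid a b lo hi)) z) ⬝ᵥ
          H₁ *ᵥ ((fderiv ℝ V · (0, 1)) ∘ uncurry (trapezoid a b lo hi)) z).re))) _
  generalize V ∘ uncurry (trapezoid a b lo hi) = X at hX ⊢
  generalize (fderiv ℝ V · (0, 1)) ∘ uncurry (trapezoid a b lo hi) = Y at hY ⊢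
  fun_prop

lemma differentiableAt_trapezoid_of_contDiffOn (hV : ContDiffOn ℝ 1 V (Ioo 0 t ×ˢ univ))
    (hs : s ∈ Ioo 0 t) : DifferentiableAt ℝ V (trapezoid a b lo hi s θ) :=
  (hV.differentiableOn one_ne_zero).differentiableAt
    ((isOpen_Ioo.prod isOpen_univ).mem_nhds ⟨hs, trivial⟩)

lemma hasDerivAt_trapezoidEnergy (hH₂ : H₂.IsHermitian) (hV : ContDiffOn ℝ 1 V (Ioo 0 t ×ˢ univ))
    (hpde : ∀ q ∈ Ioo 0 t ×ˢ univ,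
      fderiv ℝ V q (1, 0) = -(H₁ *ᵥ fderiv ℝ V q (0, 1)) + Complex.I • H₂ *ᵥ V q)
    (hs : s ∈ Ioo 0 t) :
    HasDerivAt (trapezoidEnergy V a b lo hi · θ) (trapezoidEnergyRate H₁ V a b lo hi s θ) s := by
  have hN := hasDerivAt_re_star_dotProduct_self_comp (γ := (trapezoid a b lo hi · θ)) hH₂
    (differentiableAt_trapezoid_of_contDiffOn hV hs) (hpde _ ⟨hs, trivial⟩)
    (hasDerivAt_trapezoid_time s θ)
  have hΔ : HasDerivAt (fun x => b + lo * x - (a + hi * x)) (lo - hi) s := by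
    simpa using (((hasDerivAt_id' s).const_mul lo).const_add b).fun_sub
      (((hasDerivAt_id' s).const_mul hi).const_add a)
  exact (hΔ.mul hN).congr_deriv (by simp only [trapezoidEnergyRate]; ring)

lemma hasDerivAt_trapezoidFlux (hH₁ : H₁.IsHermitian) (hH₂ : H₂.IsHermitian)
    (hV : ContDiffOn ℝ 1 V (Ioo 0 t ×ˢ univ))
    (hpde : ∀ q ∈ Ioo 0 t ×ˢ univ,
      fderiv ℝ V q (1, 0) = -(H₁ *ᵥ fderiv ℝ V q (0, 1)) + Complex.I • H₂ *ᵥ V q)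
    (hs : s ∈ Ioo 0 t) :
    HasDerivAt (trapezoidFlux H₁ V a b lo hi s) (trapezoidEnergyRate H₁ V a b lo hi s θ) θ := by
  have hVd := differentiableAt_trapezoid_of_contDiffOn (a := a) (b := b) (lo := lo) (hi := hi)
    (θ := θ) hV hs
  have hγ := hasDerivAt_trapezoid_param (a := a) (b := b) (lo := lo) (hi := hi) s θ
  have hN := hasDerivAt_re_star_dotProduct_self_comp hH₂ hVd (hpde _ ⟨hs, trivial⟩) hγ
  have hQ := (hVd.hasFDerivAt.comp_hasDerivAt θ hγ).re_star_dotProduct_mulVec_self hH₁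
  rw [ContinuousLinearMap.apply_prod_eq] at hQ
  simp only [zero_smul, zero_add, mulVec_smul, dotProduct_smul, Complex.real_smul,
    Complex.re_ofReal_mul, Function.comp_apply] at hQ
  have hc : HasDerivAt (fun θ => (1 - θ) * hi + θ * lo) (lo - hi) θ := by
    simpa [add_comm, sub_eq_neg_add] using
      (((hasDerivAt_id' θ).const_sub 1).mul_const hi).fun_add ((hasDerivAt_id' θ).mul_const lo)
  exact ((hc.mul hN).sub hQ).congr_deriv (by simp only [trapezoidEnergyRate]; ring)

variable [DecidableEq m]

lemma trapezoidFlux_one_le_zero (hH₁ : H₁.IsHermitian) (hlo : ∀ i, lo ≤ hH₁.eigenvalues i)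
    (hhi : ∀ i, hH₁.eigenvalues i ≤ hi) :
    trapezoidFlux H₁ V a b lo hi s 1 ≤ trapezoidFlux H₁ V a b lo hi s 0 := by
  have h₁ := hH₁.le_re_star_dotProduct_mulVec hlo (V (trapezoid a b lo hi s 1))
  have h₀ := hH₁.re_star_dotProduct_mulVec_le hhi (V (trapezoid a b lo hi s 0))
  simp only [trapezoidFlux]
  norm_num
  linarith

theorem antitoneOn_trapezoidEnergy (hH₁ : H₁.IsHermitian) (hH₂ : H₂.IsHermitian)
    (hlo : ∀ i, lo ≤ hH₁.eigenvalues i) (hhi : ∀ i, hH₁.eigenvalues i ≤ hi) (ht : 0 ≤ t)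
    (hVc : ContinuousOn V (Icc 0 t ×ˢ univ)) (hV : ContDiffOn ℝ 1 V (Ioo 0 t ×ˢ univ))
    (hpde : ∀ q ∈ Ioo 0 t ×ˢ univ,
      fderiv ℝ V q (1, 0) = -(H₁ *ᵥ fderiv ℝ V q (0, 1)) + Complex.I • H₂ *ᵥ V q) :
    AntitoneOn (fun s => ∫ θ in (0 : ℝ)..1, trapezoidEnergy V a b lo hi s θ) (Icc 0 t) :=
  antitoneOn_intervalIntegral_of_hasDerivAt_flux ht (continuousOn_trapezoidEnergy hVc)
    (continuousOn_trapezoidEnergyRate hVc hV)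
    (fun _ hs _ _ => hasDerivAt_trapezoidEnergy hH₂ hV hpde hs)
    (fun _ hs _ _ => hasDerivAt_trapezoidFlux hH₁ hH₂ hV hpde hs)
    (fun _ _ => trapezoidFlux_one_le_zero hH₁ hlo hhi)

theorem eq_zero_of_eq_zero_on_domain_of_dependence (hH₁ : H₁.IsHermitian) (hH₂ : H₂.IsHermitian)
    {p δ : ℝ} (hlo : ∀ i, lo ≤ hH₁.eigenvalues i) (hhi : ∀ i, hH₁.eigenvalues i ≤ hi)
    (ht : 0 ≤ t) (hδ : 0 < δ)
    (hVc : ContinuousOn V (Icc 0 t ×ˢ univ)) (hV : ContDiffOn ℝ 1 V (Ioo 0 t ×ˢ univ))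
    (hpde : ∀ q ∈ Ioo 0 t ×ˢ univ,
      fderiv ℝ V q (1, 0) = -(H₁ *ᵥ fderiv ℝ V q (0, 1)) + Complex.I • H₂ *ᵥ V q)
    (h₀ : ∀ x ∈ Icc (p - hi * t - δ) (p - lo * t + δ), V (0, x) = 0) : V (t, p) = 0 := by
  rcases ht.eq_or_lt with rfl | ht₀
  · exact h₀ p ⟨by linarith, by linarith⟩
  rcases isEmpty_or_nonempty m with hm | ⟨⟨i⟩⟩
  · exact Subsingleton.elim _ _
  have hlohi : lo ≤ hi := (hlo i).trans (hhi i)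
  set a := p - hi * t - δ
  set b := p - lo * t + δ
  have hnonneg (s θ : ℝ) (hs : s ≤ t) : 0 ≤ trapezoidEnergy V a b lo hi s θ :=
    mul_nonneg (by nlinarith [mul_le_mul_of_nonneg_left hs (sub_nonneg.mpr hlohi)])
      (re_star_dotProduct_self_nonneg _)
  have hinitial : ∀ θ ∈ uIcc (0 : ℝ) 1, trapezoidEnergy V a b lo hi 0 θ = 0 := by
    intro θ hθ
    rw [uIcc_of_le zero_le_one] at hθ
    rw [trapezoidEnergy, trapezoid, h₀ _ ⟨?_, ?_⟩, dotProduct_zero, Complex.zero_re, mul_zero] <;>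
      simp only [mul_zero, add_zero] <;>
      nlinarith [hθ.1, hθ.2, mul_nonneg (sub_nonneg.mpr hlohi) ht]
  have hJ : ∫ θ in (0 : ℝ)..1, trapezoidEnergy V a b lo hi t θ = 0 :=
    le_antisymm ((antitoneOn_trapezoidEnergy hH₁ hH₂ hlo hhi ht hVc hV hpde ⟨le_rfl, ht⟩
      ⟨ht, le_rfl⟩ ht).trans_eq ((intervalIntegral.integral_congr hinitial).trans (by simp)))
      (intervalIntegral.integral_nonneg zero_le_one fun θ _ => hnonneg t θ le_rfl)
  have hslice : ContinuousOn (trapezoidEnergy V a b lo hi t) (Icc 0 1) :=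
    (continuousOn_trapezoidEnergy hVc).uncurry_left t (right_mem_Icc.mpr ht)
  have hmid := eq_zero_of_intervalIntegral_eq_zero zero_le_one hslice
    (fun θ _ => hnonneg t θ le_rfl) hJ (x := 1 / 2) ⟨by norm_num, by norm_num⟩
  have hp : trapezoid a b lo hi t (1 / 2) = (t, p) := by
    simp only [trapezoid, a, b, Prod.mk.injEq, true_and]
    ring
  rw [trapezoidEnergy, hp, mul_eq_zero, re_star_dotProduct_self_eq_zero] at hmid
  exact hmid.resolve_left (by linarith)

end Convection

theorem schrodingerisation_pointwise_recovery_general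
    {n : ℕ} (H₁ H₂ : Matrix (Fin n) (Fin n) ℂ)
    (hH₁ : H₁.IsHermitian) (hH₂ : H₂.IsHermitian)
    (lamMax : ℝ) (hlam : IsGreatest (Set.range hH₁.eigenvalues) lamMax)
    (T : ℝ) (hT : 0 < T)
    (uf : ℝ → Fin n → ℂ)
    (huf : ∀ t ∈ Set.Icc (0 : ℝ) T,
      HasDerivAt uf ((H₁ + Complex.I • H₂).mulVec (uf t)) t)
    (w : ℝ → ℝ → Fin n → ℂ)
    (hw : ContDiffOn ℝ 1 (fun q : ℝ × ℝ => w q.1 q.2) (Set.Icc (0 : ℝ) T ×ˢ Set.univ))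
    (hpde : ∀ t ∈ Set.Icc (0 : ℝ) T, ∀ p : ℝ,
      deriv (fun τ => w τ p) t
        = -(H₁.mulVec (deriv (fun q => w t q) p)) + Complex.I • H₂.mulVec (w t p))
    (hinit : ∀ p : ℝ, 0 ≤ p → w 0 p = Real.exp (-p) • uf 0) :
    (∀ t ∈ Set.Icc (0 : ℝ) T, ∀ pstar : ℝ, max (lamMax * T) 0 < pstar →
        w t pstar = Real.exp (-pstar) • uf t) ∧
      (∀ pstar : ℝ, max (lamMax * T) 0 < pstar →
        uf T = Real.exp pstar • w T pstar) := by
  obtain ⟨lo, hlo⟩ := (finite_range hH₁.eigenvalues).bddBelow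
  have hhi (i) : hH₁.eigenvalues i ≤ lamMax := hlam.2 ⟨i, rfl⟩
  have hΩ : Ioo 0 T ×ˢ univ ⊆ Icc 0 T ×ˢ (univ : Set ℝ) := prod_mono Ioo_subset_Icc_self le_rfl
  have hufc : ContinuousOn uf (Icc 0 T) := fun s hs => (huf s hs).continuousAt.continuousWithinAt
  have hu : ContDiffOn ℝ 1 uf (Ioo 0 T) :=
    contDiffOn_one_of_hasDerivAt isOpen_Ioo (fun s hs => huf s (Ioo_subset_Icc_self hs))
      ((continuous_const.matrix_mulVec continuous_id).comp_continuousOn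
        (hufc.mono Ioo_subset_Icc_self))
  set V := fun q : ℝ × ℝ => w q.1 q.2 - Real.exp (-q.2) • uf q.1
  have hVc : ContinuousOn V (Icc 0 T ×ˢ univ) := continuousOn_sub_exp_neg_smul hw.continuousOn hufc
  have hV : ContDiffOn ℝ 1 V (Ioo 0 T ×ˢ univ) := contDiffOn_sub_exp_neg_smul (hw.mono hΩ) hu
  have hVpde (q) (hq : q ∈ Ioo 0 T ×ˢ univ) :
      fderiv ℝ V q (1, 0) = -(H₁ *ᵥ fderiv ℝ V q (0, 1)) + Complex.I • H₂ *ᵥ V q :=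
    convection_pde_sub_exp_neg_smul ((hw.differentiableOn one_ne_zero).differentiableAt
      (Filter.mem_of_superset ((isOpen_Ioo.prod isOpen_univ).mem_nhds hq) hΩ))
      (hpde q.1 (hΩ hq).1 q.2) (huf q.1 (hΩ hq).1)
  have hrecover (t) (ht : t ∈ Icc 0 T) (p) (hp : max (lamMax * T) 0 < p) : V (t, p) = 0 :=
    eq_zero_of_eq_zero_on_domain_of_dependence hH₁ hH₂ (fun i => hlo ⟨i, rfl⟩) hhi ht.1
      (δ := (p - max (lamMax * T) 0) / 2) (by linarith)
      (hVc.mono (prod_mono (Icc_subset_Icc_right ht.2) le_rfl))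
      (hV.mono (prod_mono (Ioo_subset_Ioo_right ht.2) le_rfl))
      (fun q hq => hVpde q ⟨Ioo_subset_Ioo_right ht.2 hq.1, trivial⟩)
      fun x hx => sub_eq_zero.mpr (hinit x (by
        nlinarith [hx.1, le_max_left (lamMax * T) 0, le_max_right (lamMax * T) 0, ht.1, ht.2]))
  refine ⟨fun t ht p hp => sub_eq_zero.mp (hrecover t ht p hp), fun p hp => ?_⟩
  rw [sub_eq_zero.mp (hrecover T ⟨hT.le, le_rfl⟩ p hp), smul_smul, ← Real.exp_add,
    add_neg_cancel, Real.exp_zero, one_smul]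

/-- Pointwise recovery theorem for Schrödingerisation: the solution of
`u_f′ = (H₁ + iH₂) u_f` is recovered from the warped-phase convection system by
evaluating at any point `p* > max{λ_max T, 0}`, where `λ_max` is the largest
eigenvalue of the Hermitian matrix `H₁`. -/
theorem schrodingerisation_pointwise_recovery
    {n : ℕ} (H₁ H₂ : Matrix (Fin n) (Fin n) ℂ)
    (hH₁ : H₁.IsHermitian) (hH₂ : H₂.IsHermitian)
    (lamMax : ℝ) (hlam : IsGreatest (Set.range hH₁.eigenvalues) lamMax)
    (T : ℝ) (hT : 0 < T)
    (uf : ℝ → Fin n → ℂ)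
    (huf : ∀ t ∈ Set.Icc (0 : ℝ) T,
      HasDerivAt uf ((H₁ + Complex.I • H₂).mulVec (uf t)) t)
    (w : ℝ → ℝ → Fin n → ℂ)
    (hw : ContDiffOn ℝ 1 (fun q : ℝ × ℝ => w q.1 q.2) (Set.Icc (0 : ℝ) T ×ˢ Set.univ))
    (hpde : ∀ t ∈ Set.Icc (0 : ℝ) T, ∀ p : ℝ,
      deriv (fun τ => w τ p) t
        = -(H₁.mulVec (deriv (fun q => w t q) p)) + Complex.I • H₂.mulVec (w t p))
    (hinit : ∀ p : ℝ, 0 ≤ p → w 0 p = Real.exp (-p) • uf 0)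
    (hL2a : ∀ t ∈ Set.Icc (0 : ℝ) T,
      MemLp (fun p : ℝ => w t p - Real.exp (-p) • uf t) 2 volume)
    (hL2b : ∀ t ∈ Set.Icc (0 : ℝ) T,
      MemLp (fun p : ℝ => deriv (fun q => w t q) p + Real.exp (-p) • uf t) 2 volume) :
    (∀ t ∈ Set.Icc (0 : ℝ) T, ∀ pstar : ℝ, max (lamMax * T) 0 < pstar →
        w t pstar = Real.exp (-pstar) • uf t) ∧
      (∀ pstar : ℝ, max (lamMax * T) 0 < pstar →
        uf T = Real.exp pstar • w T pstar) :=
  schrodingerisation_pointwise_recovery_general H₁ H₂ hH₁ hH₂ lamMax hlam T hT uf huf w hw hpde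
    hinit
end

section
/- Fix m ≥ 1 and set M = 2^m. Let S⁻ = Σ_{j=1}^{M−1}|j−1⟩⟨j|, S⁺ = (S⁻)†, I^r = Σ_{j=1}^{M−1}|j⟩⟨j|, and define the difference matrices D⁻ := S⁻ − I^r and D⁺ := I^r − S⁺. Then D⁻ = −(D⁺)†. Consequently, for the Kronecker-product difference operators D_x^{±} = I_M ⊗ I_M ⊗ D^{±}/Δx, D_y^{±} = I_M ⊗ D^{±} ⊗ I_M/Δy, D_z^{±} = D^{±} ⊗ I_M ⊗ I_M/Δz (with mesh sizes Δx, Δy, Δz > 0), the 4×4-block curl matrices M_E := [[0, −D_z⁺, D_y⁺, −D_x⁺],[D_z⁺, 0, −D_x⁺, −D_y⁺],[−D_y⁺, D_x⁺, 0, −D_z⁺],[D_x⁺, D_y⁺, D_z⁺, 0]] and M_B := [[0, D_z⁻, −D_y⁻, D_x⁻],[−D_z⁻, 0, D_x⁻, D_y⁻],[D_y⁻, −D_x⁻, 0, D_z⁻],[−D_x⁻, −D_y⁻, −D_z⁻, 0]] satisfy M_B = −(M_E)†, and therefore the semi-discrete Maxwell system matrix A = [[0, M_E],[M_B, 0]]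 is skew-Hermitian: A† = −A. -/
open Matrix
open scoped Kronecker Matrix

/-- The left-shift matrix `S⁻ = Σ_{j=1}^{M−1} |j−1⟩⟨j|`. -/
noncomputable def Sminus (M : ℕ) : Matrix (Fin M) (Fin M) ℂ :=
  ∑ j : Fin M,
    if h : (j : ℕ) = 0 then 0
    else Matrix.single ⟨(j : ℕ) - 1, by have := j.isLt; omega⟩ j 1

/-- The right-shift matrix `S⁺ = Σ_{j=1}^{M−1} |j⟩⟨j−1|`. -/
noncomputable def Splus (M : ℕ) : Matrix (Fin M) (Fin M) ℂ :=
  ∑ j : Fin M,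
    if h : (j : ℕ) = 0 then 0
    else Matrix.single j ⟨(j : ℕ) - 1, by have := j.isLt; omega⟩ 1

/-- The restricted identity `I^r = Σ_{j=1}^{M−1} |j⟩⟨j|`. -/
noncomputable def Ir (M : ℕ) : Matrix (Fin M) (Fin M) ℂ :=
  ∑ j : Fin M,
    if h : (j : ℕ) = 0 then 0 else Matrix.single j j 1

/-- The backward difference matrix `D⁻ = S⁻ − I^r`. -/
noncomputable def Dminus (M : ℕ) : Matrix (Fin M) (Fin M) ℂ := Sminus M - Ir M

/-- The forward difference matrix `D⁺ = I^r − S⁺`. -/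
noncomputable def Dplus (M : ℕ) : Matrix (Fin M) (Fin M) ℂ := Ir M - Splus M

/-- `D_x^{±} = I_M ⊗ I_M ⊗ D^{±} / Δx`. -/
noncomputable def DxOp (M : ℕ) (Δx : ℝ) (D : Matrix (Fin M) (Fin M) ℂ) :
    Matrix (Fin M × Fin M × Fin M) (Fin M × Fin M × Fin M) ℂ :=
  Δx⁻¹ • ((1 : Matrix (Fin M) (Fin M) ℂ) ⊗ₖ ((1 : Matrix (Fin M) (Fin M) ℂ) ⊗ₖ D))

/-- `D_y^{±} = I_M ⊗ D^{±} ⊗ I_M / Δy`. -/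
noncomputable def DyOp (M : ℕ) (Δy : ℝ) (D : Matrix (Fin M) (Fin M) ℂ) :
    Matrix (Fin M × Fin M × Fin M) (Fin M × Fin M × Fin M) ℂ :=
  Δy⁻¹ • ((1 : Matrix (Fin M) (Fin M) ℂ) ⊗ₖ (D ⊗ₖ (1 : Matrix (Fin M) (Fin M) ℂ)))

/-- `D_z^{±} = D^{±} ⊗ I_M ⊗ I_M / Δz`. -/
noncomputable def DzOp (M : ℕ) (Δz : ℝ) (D : Matrix (Fin M) (Fin M) ℂ) :
    Matrix (Fin M × Fin M × Fin M) (Fin M × Fin M × Fin M) ℂ :=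
  Δz⁻¹ • (D ⊗ₖ ((1 : Matrix (Fin M) (Fin M) ℂ) ⊗ₖ (1 : Matrix (Fin M) (Fin M) ℂ)))

/-- Assemble a `4×4` array of blocks into one matrix:
`Σ_{a,b} |a⟩⟨b| ⊗ (block a b)`. -/
noncomputable def blocks4 {ι : Type*} [Fintype ι] [DecidableEq ι]
    (Bl : Fin 4 → Fin 4 → Matrix ι ι ℂ) :
    Matrix (Fin 4 × ι) (Fin 4 × ι) ℂ :=
  ∑ a : Fin 4, ∑ b : Fin 4, Matrix.single a b (1 : ℂ) ⊗ₖ Bl a b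

/-- The discrete curl matrix `M_E` acting on the electric variables. -/
noncomputable def curlE (M : ℕ) (Δx Δy Δz : ℝ) :
    Matrix (Fin 4 × (Fin M × Fin M × Fin M)) (Fin 4 × (Fin M × Fin M × Fin M)) ℂ :=
  blocks4
    ![![0, -DzOp M Δz (Dplus M), DyOp M Δy (Dplus M), -DxOp M Δx (Dplus M)],
      ![DzOp M Δz (Dplus M), 0, -DxOp M Δx (Dplus M), -DyOp M Δy (Dplus M)],
      ![-DyOp M Δy (Dplus M), DxOp M Δx (Dplus M), 0, -DzOp M Δz (Dplus M)],
      ![DxOp M Δx (Dplus M), DyOp M Δy (Dplus M), DzOp M Δz (Dplus M), 0]]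

/-- The discrete curl matrix `M_B` acting on the magnetic variables. -/
noncomputable def curlB (M : ℕ) (Δx Δy Δz : ℝ) :
    Matrix (Fin 4 × (Fin M × Fin M × Fin M)) (Fin 4 × (Fin M × Fin M × Fin M)) ℂ :=
  blocks4
    ![![0, DzOp M Δz (Dminus M), -DyOp M Δy (Dminus M), DxOp M Δx (Dminus M)],
      ![-DzOp M Δz (Dminus M), 0, DxOp M Δx (Dminus M), DyOp M Δy (Dminus M)],
      ![DyOp M Δy (Dminus M), -DxOp M Δx (Dminus M), 0, DzOp M Δz (Dminus M)],
      ![-DxOp M Δx (Dminus M), -DyOp M Δy (Dminus M), -DzOp M Δz (Dminus M), 0]]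

/-! Adjoints swap the shift matrices `S⁻ ↔ S⁺` and fix `I^r`, so `(D⁺)† = I^r − S⁻ = −D⁻`.
Conjugate transposition distributes over Kronecker products and the identity is Hermitian,
so each `D_w^{±}` (real scaling `1/Δw`) inherits this relation; transposing the block array of
`M_E` then reproduces `−M_B` entry by entry, and the block-antidiagonal `A` is skew-Hermitian. -/

namespace Matrix

variable {α l m n p : Type*}

theorem kronecker_neg [Mul α] [HasDistribNeg α] (A : Matrix l m α) (B : Matrix n p α) :
    A ⊗ₖ (-B) = -(A ⊗ₖ B) := by
  ext; simp

theorem neg_kronecker [Mul α] [HasDistribNeg α] (A : Matrix l m α) (B : Matrix n p α) :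
    (-A) ⊗ₖ B = -(A ⊗ₖ B) := by
  ext; simp

theorem conjTranspose_fromBlocks_zero_zero [AddGroup α] [StarAddMonoid α]
    (B : Matrix m n α) (C : Matrix n m α) (hC : C = -Bᴴ) :
    (fromBlocks 0 B C 0)ᴴ = -fromBlocks 0 B C 0 := by
  subst hC
  simp [fromBlocks_conjTranspose, fromBlocks_neg]

end Matrix

theorem conjTranspose_Sminus (M : ℕ) : (Sminus M)ᴴ = Splus M := by
  simp only [Sminus, Splus, conjTranspose_sum, apply_dite conjTranspose, conjTranspose_zero,
    conjTranspose_single, star_one]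

theorem conjTranspose_Ir (M : ℕ) : (Ir M)ᴴ = Ir M := by
  simp only [Ir, conjTranspose_sum, apply_dite conjTranspose, conjTranspose_zero,
    conjTranspose_single, star_one]

theorem conjTranspose_Dplus (M : ℕ) : (Dplus M)ᴴ = -Dminus M := by
  have hSplus : (Splus M)ᴴ = Sminus M := by
    rw [← conjTranspose_Sminus, conjTranspose_conjTranspose]
  rw [Dplus, Dminus, conjTranspose_sub, conjTranspose_Ir, hSplus, neg_sub]

section DifferenceOperators

variable (M : ℕ) (Δ : ℝ) (D : Matrix (Fin M) (Fin M) ℂ)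

theorem conjTranspose_DxOp : (DxOp M Δ D)ᴴ = DxOp M Δ Dᴴ := by
  simp [DxOp, conjTranspose_kronecker]

theorem conjTranspose_DyOp : (DyOp M Δ D)ᴴ = DyOp M Δ Dᴴ := by
  simp [DyOp, conjTranspose_kronecker]

theorem conjTranspose_DzOp : (DzOp M Δ D)ᴴ = DzOp M Δ Dᴴ := by
  simp [DzOp, conjTranspose_kronecker]

theorem DxOp_neg : DxOp M Δ (-D) = -DxOp M Δ D := by
  rw [DxOp, DxOp, kronecker_neg, kronecker_neg, smul_neg]

theorem DyOp_neg : DyOp M Δ (-D) = -DyOp M Δ D := by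
  rw [DyOp, DyOp, neg_kronecker, kronecker_neg, smul_neg]

theorem DzOp_neg : DzOp M Δ (-D) = -DzOp M Δ D := by
  rw [DzOp, DzOp, neg_kronecker, smul_neg]

end DifferenceOperators

section Blocks

variable {ι : Type*} [Fintype ι] [DecidableEq ι] (Bl : Fin 4 → Fin 4 → Matrix ι ι ℂ)

theorem conjTranspose_blocks4 : (blocks4 Bl)ᴴ = blocks4 fun a b => (Bl b a)ᴴ := by
  rw [blocks4, blocks4, conjTranspose_sum, Finset.sum_comm]
  simp only [conjTranspose_sum, conjTranspose_kronecker, conjTranspose_single, star_one]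

theorem blocks4_neg : blocks4 (fun a b => -Bl a b) = -blocks4 Bl := by
  simp only [blocks4, kronecker_neg, Finset.sum_neg_distrib]

end Blocks

theorem curlB_eq_neg_conjTranspose_curlE (M : ℕ) (Δx Δy Δz : ℝ) :
    curlB M Δx Δy Δz = -(curlE M Δx Δy Δz)ᴴ := by
  rw [curlE, conjTranspose_blocks4, ← blocks4_neg, curlB]
  congr 1
  funext a b
  fin_cases a <;> fin_cases b <;>
    simp [conjTranspose_DxOp, conjTranspose_DyOp, conjTranspose_DzOp, conjTranspose_Dplus,
      DxOp_neg, DyOp_neg, DzOp_neg]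

theorem yee_system_matrix_skew_hermitian_general
    (m : ℕ) (Δx Δy Δz : ℝ) :
    Dminus (2 ^ m) = -(Dplus (2 ^ m))ᴴ ∧
      curlB (2 ^ m) Δx Δy Δz = -(curlE (2 ^ m) Δx Δy Δz)ᴴ ∧
      (Matrix.fromBlocks 0 (curlE (2 ^ m) Δx Δy Δz) (curlB (2 ^ m) Δx Δy Δz) 0)ᴴ =
        -Matrix.fromBlocks 0 (curlE (2 ^ m) Δx Δy Δz) (curlB (2 ^ m) Δx Δy Δz) 0 := by
  have hcurl := curlB_eq_neg_conjTranspose_curlE (2 ^ m) Δx Δy Δz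
  exact ⟨by rw [conjTranspose_Dplus, neg_neg], hcurl,
    conjTranspose_fromBlocks_zero_zero _ _ hcurl⟩

/-- The semi-discrete Maxwell system matrix `A = [[0, M_E],[M_B, 0]]` of Yee's
scheme is skew-Hermitian: `D⁻ = −(D⁺)†`, `M_B = −(M_E)†`, and `A† = −A`. -/
theorem yee_system_matrix_skew_hermitian
    (m : ℕ) (hm : 1 ≤ m) (Δx Δy Δz : ℝ)
    (hΔx : 0 < Δx) (hΔy : 0 < Δy) (hΔz : 0 < Δz) :
    Dminus (2 ^ m) = -(Dplus (2 ^ m))ᴴ ∧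
      curlB (2 ^ m) Δx Δy Δz = -(curlE (2 ^ m) Δx Δy Δz)ᴴ ∧
      (Matrix.fromBlocks 0 (curlE (2 ^ m) Δx Δy Δz) (curlB (2 ^ m) Δx Δy Δz) 0)ᴴ =
        -Matrix.fromBlocks 0 (curlE (2 ^ m) Δx Δy Δz) (curlB (2 ^ m) Δx Δy Δz) 0 :=
  yee_system_matrix_skew_hermitian_general m Δx Δy Δz
end
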